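/- Let n ≥ 3 and let V, W be conformal Killing vectors on ℝⁿ. Define: D_V f = Σ_a V^a ∂_a f + ((n−2)/(2n))(div V) f (and similarly D_W); for a symmetric trace-free 2-tensor field T, D_T f = Σ_{a,b} T^{ab} ∂_a ∂_b f + (n/(n+2)) Σ_{a,b} (∂_a T^{ab}) ∂_b f + (n(n−2)/(4(n+2)(n+1))) (Σ_{a,b} ∂_a ∂_b T^{ab}) f; (V⊙W)^{ab} = (1/2)(V^a W^b + V^b W^a) − (1/n) δ^{ab} Σ_c V^c W^c; [V,W]^a = Σ_b (V^b ∂_b W^a − W^b ∂_b V^a); and ⟨V,W⟩ = Σ_{a,b} (∂_b V^a)(∂_a W^b) − ((n−2)/n²)(div V)(div W) − (2/n) Σ_a V^a ∂_a(div W) − (2/n) Σ_a W^a ∂_a(div V). Then for every smooth f : ℝⁿ → ℝ: D_V(D_W f) = D_{V⊙W} f + (1/2) D_{[V,W]} f − ((n−2)/(4(n+1))) ⟨V,W⟩ f + (1/n) (Σ_a V^a W^a) Δf. -/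

import Mathlib

/-- Partial derivative in the `a`-th coordinate direction. -/
noncomputable def pd {n : ℕ} (a : Fin n) (f : (Fin n → ℝ) → ℝ) : (Fin n → ℝ) → ℝ :=
  fun x => fderiv ℝ f x (Pi.single a (1 : ℝ))

/-- The Laplacian `Δf = Σ_a ∂_a ∂_a f`. -/
noncomputable def lap {n : ℕ} (f : (Fin n → ℝ) → ℝ) : (Fin n → ℝ) → ℝ :=
  fun x => ∑ a, pd a (pd a f) x

/-- The divergence `div V = Σ_a ∂_a V^a`. -/
noncomputable def divg {n : ℕ} (V : (Fin n → ℝ) → (Fin n → ℝ)) : (Fin n → ℝ) → ℝ :=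
  fun x => ∑ a, pd a (fun y => V y a) x

/-- A conformal Killing vector on ℝⁿ. -/
def IsCKV (n : ℕ) (V : (Fin n → ℝ) → (Fin n → ℝ)) : Prop :=
  ContDiff ℝ (⊤ : ℕ∞) V ∧ ∀ (a b : Fin n) (x : Fin n → ℝ),
    pd a (fun y => V y b) x + pd b (fun y => V y a) x
      = 2 / (n : ℝ) * divg V x * (if a = b then (1 : ℝ) else 0)

/-- First-order operator `D_V f = Σ_a V^a ∂_a f + ((n−2)/(2n)) (div V) f`. -/
noncomputable def opD {n : ℕ} (V : (Fin n → ℝ) → (Fin n → ℝ)) (f : (Fin n → ℝ) → ℝ) :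
    (Fin n → ℝ) → ℝ :=
  fun x => (∑ a, V x a * pd a f x) + ((n : ℝ) - 2) / (2 * n) * divg V x * f x

/-- Second-order operator `D_T f = Σ T^{ab}∂_a∂_b f + (n/(n+2)) Σ (∂_a T^{ab}) ∂_b f
  + (n(n−2)/(4(n+2)(n+1))) (Σ ∂_a∂_b T^{ab}) f` for a 2-tensor field `T`. -/
noncomputable def opD2 {n : ℕ} (T : (Fin n → ℝ) → Fin n → Fin n → ℝ)
    (f : (Fin n → ℝ) → ℝ) : (Fin n → ℝ) → ℝ :=
  fun x => (∑ a, ∑ b, T x a b * pd a (pd b f) x)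
    + (n : ℝ) / ((n : ℝ) + 2) * ∑ b, (∑ a, pd a (fun y => T y a b) x) * pd b f x
    + (n : ℝ) * ((n : ℝ) - 2) / (4 * ((n : ℝ) + 2) * ((n : ℝ) + 1))
        * (∑ a, ∑ b, pd a (pd b fun y => T y a b) x) * f x

/-- Trace-free symmetric product
`(V⊙W)^{ab} = (1/2)(V^a W^b + V^b W^a) − (1/n) δ^{ab} Σ_c V^c W^c`. -/
noncomputable def sprod {n : ℕ} (V W : (Fin n → ℝ) → (Fin n → ℝ)) :
    (Fin n → ℝ) → Fin n → Fin n → ℝ :=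
  fun x a b => (V x a * W x b + V x b * W x a) / 2
    - (if a = b then (1 : ℝ) else 0) / n * ∑ c, V x c * W x c

/-- Lie bracket `[V,W]^a = Σ_b (V^b ∂_b W^a − W^b ∂_b V^a)`. -/
noncomputable def bracket {n : ℕ} (V W : (Fin n → ℝ) → (Fin n → ℝ)) :
    (Fin n → ℝ) → (Fin n → ℝ) :=
  fun x a => ∑ b, (V x b * pd b (fun y => W y a) x - W x b * pd b (fun y => V y a) x)

/-- Pairing `⟨V,W⟩ = Σ (∂_b V^a)(∂_a W^b) − ((n−2)/n²)(div V)(div W)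
  − (2/n) Σ V^a ∂_a(div W) − (2/n) Σ W^a ∂_a(div V)`. -/
noncomputable def pairing {n : ℕ} (V W : (Fin n → ℝ) → (Fin n → ℝ)) :
    (Fin n → ℝ) → ℝ :=
  fun x => (∑ a, ∑ b, pd b (fun y => V y a) x * pd a (fun y => W y b) x)
    - ((n : ℝ) - 2) / (n : ℝ) ^ 2 * divg V x * divg W x
    - 2 / (n : ℝ) * ∑ a, V x a * pd a (divg W) x
    - 2 / (n : ℝ) * ∑ a, W x a * pd a (divg V) x

section Helpers

variable {n : ℕ}

lemma pd_smooth {f : (Fin n → ℝ) → ℝ} (hf : ContDiff ℝ (⊤ : ℕ∞) f) (a : Fin n) :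
    ContDiff ℝ (⊤ : ℕ∞) (pd a f) :=
  (hf.fderiv_right (m := (⊤ : ℕ∞)) (by simp)).clm_apply contDiff_const

lemma cdiff {f : (Fin n → ℝ) → ℝ} (hf : ContDiff ℝ (⊤ : ℕ∞) f) (x : Fin n → ℝ) :
    DifferentiableAt ℝ f x := (hf.differentiable (by simp)).differentiableAt

lemma pd_add {f g : (Fin n → ℝ) → ℝ} {x : Fin n → ℝ} (hf : DifferentiableAt ℝ f x)
    (hg : DifferentiableAt ℝ g x) (a : Fin n) :
    pd a (fun y => f y + g y) x = pd a f x + pd a g x := by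
  simp only [pd]; rw [fderiv_fun_add hf hg]; rfl

lemma pd_sub {f g : (Fin n → ℝ) → ℝ} {x : Fin n → ℝ} (hf : DifferentiableAt ℝ f x)
    (hg : DifferentiableAt ℝ g x) (a : Fin n) :
    pd a (fun y => f y - g y) x = pd a f x - pd a g x := by
  simp only [pd]; rw [fderiv_fun_sub hf hg]; rfl

lemma pd_mul {f g : (Fin n → ℝ) → ℝ} {x : Fin n → ℝ} (hf : DifferentiableAt ℝ f x)
    (hg : DifferentiableAt ℝ g x) (a : Fin n) :
    pd a (fun y => f y * g y) x = pd a f x * g x + f x * pd a g x := by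
  simp only [pd]; rw [fderiv_fun_mul hf hg]; simp; ring

lemma pd_const_mul {f : (Fin n → ℝ) → ℝ} {x : Fin n → ℝ} (hf : DifferentiableAt ℝ f x)
    (c : ℝ) (a : Fin n) :
    pd a (fun y => c * f y) x = c * pd a f x := by
  simp only [pd]; rw [fderiv_const_mul hf c]; rfl

lemma pd_div_const {f : (Fin n → ℝ) → ℝ} {x : Fin n → ℝ} (hf : DifferentiableAt ℝ f x)
    (c : ℝ) (a : Fin n) :
    pd a (fun y => f y / c) x = pd a f x / c := by
  have h : (fun y => f y / c) = (fun y => c⁻¹ * f y) := funext fun y => by ring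
  rw [h, pd_const_mul hf, inv_mul_eq_div]

lemma pd_const (c : ℝ) (a : Fin n) (x : Fin n → ℝ) :
    pd a (fun _ => c) x = 0 := by
  simp [pd]

lemma pd_sum {ι : Type*} (s : Finset ι) {F : ι → (Fin n → ℝ) → ℝ} {x : Fin n → ℝ}
    (hF : ∀ i ∈ s, DifferentiableAt ℝ (F i) x) (a : Fin n) :
    pd a (fun y => ∑ i ∈ s, F i y) x = ∑ i ∈ s, pd a (F i) x := by
  simp only [pd]; rw [fderiv_fun_sum hF]; simp

lemma pd_comm {f : (Fin n → ℝ) → ℝ} (hf : ContDiff ℝ (⊤ : ℕ∞) f) (a b : Fin n) (x : Fin n → ℝ) :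
    pd a (pd b f) x = pd b (pd a f) x := by
  have hd : DifferentiableAt ℝ (fderiv ℝ f) x :=
    ((hf.fderiv_right (m := (⊤ : ℕ∞)) (by simp)).differentiable (by simp)).differentiableAt
  have h1 : ∀ u v : Fin n → ℝ,
      fderiv ℝ (fun y => fderiv ℝ f y u) x v = fderiv ℝ (fderiv ℝ f) x v u := by
    intro u v
    rw [fderiv_clm_apply hd (differentiableAt_const u)]
    simp
  have hsymm := ((hf.contDiffAt (x := x)).isSymmSndFDerivAt (by rw [minSmoothness_of_isRCLikeNormedField]; exact WithTop.coe_le_coe.mpr le_top)).eq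
  show fderiv ℝ (fun y => fderiv ℝ f y (Pi.single b 1)) x (Pi.single a 1)
      = fderiv ℝ (fun y => fderiv ℝ f y (Pi.single a 1)) x (Pi.single b 1)
  rw [h1, h1, hsymm]

lemma comp_smooth {V : (Fin n → ℝ) → (Fin n → ℝ)} (hV : ContDiff ℝ (⊤ : ℕ∞) V) (c : Fin n) :
    ContDiff ℝ (⊤ : ℕ∞) (fun y => V y c) := (contDiff_pi.mp hV) c

lemma divg_smooth {V : (Fin n → ℝ) → (Fin n → ℝ)} (hV : ContDiff ℝ (⊤ : ℕ∞) V) :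
    ContDiff ℝ (⊤ : ℕ∞) (divg V) := by
  show ContDiff ℝ (⊤ : ℕ∞) fun x => ∑ a, pd a (fun y => V y a) x
  exact ContDiff.sum fun a _ => pd_smooth (comp_smooth hV a) a

/-- Second derivatives of a conformal Killing vector. -/
lemma ckv_second {V : (Fin n → ℝ) → (Fin n → ℝ)} (hV : IsCKV n V) (a b c : Fin n)
    (x : Fin n → ℝ) :
    pd a (pd b (fun y => V y c)) x
      = 1/(n:ℝ) * (pd a (divg V) x * (if b = c then (1:ℝ) else 0)
        + pd b (divg V) x * (if a = c then (1:ℝ) else 0)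
        - pd c (divg V) x * (if a = b then (1:ℝ) else 0)) := by
  have hVc : ∀ c : Fin n, ContDiff ℝ (⊤ : ℕ∞) (fun y => V y c) := comp_smooth hV.1
  have hds : ContDiff ℝ (⊤ : ℕ∞) (divg V) := divg_smooth hV.1
  have hsym : ∀ i j k : Fin n, pd i (pd j (fun y => V y k)) x
      = pd j (pd i (fun y => V y k)) x := fun i j k => pd_comm (hVc k) i j x
  have hE : ∀ i j k : Fin n, pd k (pd i (fun y => V y j)) x + pd k (pd j (fun y => V y i)) x
      = 2/(n:ℝ) * pd k (divg V) x * (if i = j then (1:ℝ) else 0) := by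
    intro i j k
    have hfun : (fun y => pd i (fun z => V z j) y + pd j (fun z => V z i) y)
        = (fun y => 2/(n:ℝ) * divg V y * (if i = j then (1:ℝ) else 0)) :=
      funext fun y => hV.2 i j y
    have h2 := congrArg (fun g => pd k g x) hfun
    rw [pd_add (cdiff (pd_smooth (hVc j) i) x) (cdiff (pd_smooth (hVc i) j) x)] at h2
    rw [h2]
    by_cases hij : i = j
    · subst hij
      simp only [eq_self_iff_true, if_true, mul_one]
      exact pd_const_mul (cdiff hds x) _ k
    · simp only [if_neg hij, mul_zero]
      exact pd_const (0:ℝ) k x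
  have E1 := hE b c a
  have E2 := hE a c b
  have E3 := hE a b c
  rw [hsym b a c, hsym b c a] at E2
  rw [hsym c a b] at E3
  have key : pd a (pd b (fun y => V y c)) x
      = ((pd a (pd b (fun y => V y c)) x + pd a (pd c (fun y => V y b)) x)
        + (pd a (pd b (fun y => V y c)) x + pd c (pd b (fun y => V y a)) x)
        - (pd a (pd c (fun y => V y b)) x + pd c (pd b (fun y => V y a)) x)) / 2 := by ring
  rw [key, E1, E2, E3]
  ring

lemma dcol (b : Fin n) (g : Fin n → ℝ) : ∑ a, (if a = b then (1:ℝ) else 0) * g a = g b := by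
  simp
lemma dcol' (b : Fin n) (g : Fin n → ℝ) : ∑ a, (if b = a then (1:ℝ) else 0) * g a = g b := by
  simp

end Helpers

section Algebra
variable {n : ℕ}

lemma algA (v w : Fin n → ℝ) (H : Fin n → Fin n → ℝ) (hH : ∀ a b, H a b = H b a) :
    ∑ a, ∑ b, ((v a * w b + v b * w a)/2
        - (if a = b then (1:ℝ) else 0)/(n:ℝ) * (∑ c, v c * w c)) * H a b
      = (∑ a, ∑ b, v a * w b * H a b)
        - 1/(n:ℝ) * (∑ c, v c * w c) * (∑ a, H a a) := by
  have swap : ∑ a, ∑ b, v b * w a * H a b = ∑ a, ∑ b, v a * w b * H a b := by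
    rw [Finset.sum_comm]
    exact Finset.sum_congr rfl fun a _ => Finset.sum_congr rfl fun b _ => by rw [hH b a]
  have delta : ∑ a, ∑ b, (if a = b then (1:ℝ) else 0) * H a b = ∑ a, H a a := by
    refine Finset.sum_congr rfl fun a _ => ?_
    simp
  calc ∑ a, ∑ b, ((v a * w b + v b * w a)/2
        - (if a = b then (1:ℝ) else 0)/(n:ℝ) * (∑ c, v c * w c)) * H a b
      = ∑ a, ∑ b, ((v a * w b * H a b)/2 + (v b * w a * H a b)/2
          - (1/(n:ℝ) * (∑ c, v c * w c)) * ((if a = b then (1:ℝ) else 0) * H a b)) := by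
        refine Finset.sum_congr rfl fun a _ => Finset.sum_congr rfl fun b _ => by ring
    _ = (∑ a, ∑ b, v a * w b * H a b)/2 + (∑ a, ∑ b, v b * w a * H a b)/2
          - (1/(n:ℝ) * (∑ c, v c * w c)) * (∑ a, ∑ b, (if a = b then (1:ℝ) else 0) * H a b) := by
        simp only [Finset.sum_sub_distrib, Finset.sum_add_distrib, Finset.sum_div,
          Finset.mul_sum]
    _ = _ := by rw [swap, delta]; ring

lemma algB (hn : (n:ℝ) ≠ 0) (v w : Fin n → ℝ) (A B : Fin n → Fin n → ℝ)
    (hA : ∀ a b, A a b + A b a = 2/(n:ℝ) * (∑ c, A c c) * (if a = b then (1:ℝ) else 0))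
    (hB : ∀ a b, B a b + B b a = 2/(n:ℝ) * (∑ c, B c c) * (if a = b then (1:ℝ) else 0))
    (b : Fin n) :
    ∑ a, ((A a a * w b + v a * B a b + A a b * w a + v b * B a a)/2
        - (if a = b then (1:ℝ) else 0)/(n:ℝ) * (∑ c, (A a c * w c + v c * B a c)))
      = ((n:ℝ)^2 - 4)/(2*(n:ℝ)^2) * ((∑ c, A c c) * w b + (∑ c, B c c) * v b)
        + ((n:ℝ)+2)/(2*(n:ℝ)) * ((∑ a, v a * B a b) + (∑ a, w a * A a b)) := by
  have hA' : ∀ a c, A a c = 2/(n:ℝ) * (∑ c, A c c) * (if a = c then (1:ℝ) else 0) - A c a :=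
    fun a c => by have := hA a c; linarith
  have hB' : ∀ a c, B a c = 2/(n:ℝ) * (∑ c, B c c) * (if a = c then (1:ℝ) else 0) - B c a :=
    fun a c => by have := hB a c; linarith
  -- collapse the delta part
  have delta : ∑ a, (if a = b then (1:ℝ) else 0)/(n:ℝ) * (∑ c, (A a c * w c + v c * B a c))
      = 1/(n:ℝ) * (∑ c, (A b c * w c + v c * B b c)) := by
    have := dcol b (fun a => 1/(n:ℝ) * (∑ c, (A a c * w c + v c * B a c)))
    rw [← this]
    refine Finset.sum_congr rfl fun a _ => by ring
  rw [Finset.sum_sub_distrib, delta]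
  -- rewrite inner sum with CKV
  have inner : ∑ c, (A b c * w c + v c * B b c)
      = 2/(n:ℝ) * (∑ c, A c c) * w b + 2/(n:ℝ) * (∑ c, B c c) * v b
        - (∑ c, w c * A c b) - (∑ c, v c * B c b) := by
    have e1 : ∑ c, A b c * w c
        = 2/(n:ℝ) * (∑ c, A c c) * w b - ∑ c, w c * A c b := by
      have : ∀ c, A b c * w c
          = 2/(n:ℝ) * (∑ c, A c c) * ((if b = c then (1:ℝ) else 0) * w c) - w c * A c b :=
        fun c => by rw [hA' b c]; ring
      rw [Finset.sum_congr rfl fun c _ => this c, Finset.sum_sub_distrib, ← Finset.mul_sum,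
        dcol' b w]
    have e2 : ∑ c, v c * B b c
        = 2/(n:ℝ) * (∑ c, B c c) * v b - ∑ c, v c * B c b := by
      have : ∀ c, v c * B b c
          = 2/(n:ℝ) * (∑ c, B c c) * ((if b = c then (1:ℝ) else 0) * v c) - v c * B c b :=
        fun c => by rw [hB' b c]; ring
      rw [Finset.sum_congr rfl fun c _ => this c, Finset.sum_sub_distrib, ← Finset.mul_sum,
        dcol' b v]
    rw [Finset.sum_add_distrib, e1, e2]; ring
  rw [inner]
  -- expand the /2 part
  have part1 : ∑ a, ((A a a * w b + v a * B a b + A a b * w a + v b * B a a)/2)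
      = ((∑ c, A c c) * w b + (∑ a, v a * B a b) + (∑ a, w a * A a b)
          + (∑ c, B c c) * v b)/2 := by
    rw [Finset.sum_mul, Finset.sum_mul, ← Finset.sum_add_distrib, ← Finset.sum_add_distrib,
      ← Finset.sum_add_distrib, Finset.sum_div]
    exact Finset.sum_congr rfl fun a _ => by ring
  rw [part1]
  field_simp
  ring

lemma algC (hn3 : 3 ≤ n) (v w sV sW : Fin n → ℝ) (A B : Fin n → Fin n → ℝ)
    (hA : ∀ a b, A a b + A b a = 2/(n:ℝ) * (∑ c, A c c) * (if a = b then (1:ℝ) else 0))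
    (hB : ∀ a b, B a b + B b a = 2/(n:ℝ) * (∑ c, B c c) * (if a = b then (1:ℝ) else 0)) :
    ∑ a, ∑ b,
      ((1/(n:ℝ) * (sV a * (if b = a then (1:ℝ) else 0) + sV b * (if a = a then (1:ℝ) else 0)
            - sV a * (if a = b then (1:ℝ) else 0)) * w b
        + A b a * B a b + A a a * B b b
        + v a * (1/(n:ℝ) * (sW a * (if b = b then (1:ℝ) else 0)
            + sW b * (if a = b then (1:ℝ) else 0) - sW b * (if a = b then (1:ℝ) else 0)))
        + 1/(n:ℝ) * (sV a * (if b = b then (1:ℝ) else 0) + sV b * (if a = b then (1:ℝ) else 0)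
            - sV b * (if a = b then (1:ℝ) else 0)) * w a
        + A b b * B a a + A a b * B b a
        + v b * (1/(n:ℝ) * (sW a * (if b = a then (1:ℝ) else 0)
            + sW b * (if a = a then (1:ℝ) else 0) - sW a * (if a = b then (1:ℝ) else 0))))/2
      - (if a = b then (1:ℝ) else 0)/(n:ℝ)
          * (∑ c, (1/(n:ℝ) * (sV a * (if b = c then (1:ℝ) else 0)
                + sV b * (if a = c then (1:ℝ) else 0) - sV c * (if a = b then (1:ℝ) else 0)) * w c
              + A b c * B a c + A a c * B b c
              + v c * (1/(n:ℝ) * (sW a * (if b = c then (1:ℝ) else 0)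
                + sW b * (if a = c then (1:ℝ) else 0) - sW c * (if a = b then (1:ℝ) else 0))))))
    = ((n:ℝ)+2)*((n:ℝ)-1)/(n:ℝ)^2 * ((∑ a, w a * sV a) + (∑ a, v a * sW a))
      + ((n:ℝ)+2)/(n:ℝ) * (∑ a, ∑ b, A b a * B a b)
      + ((n:ℝ)^2-4)/(n:ℝ)^2 * (∑ c, A c c) * (∑ c, B c c) := by
  have hn0 : 0 < n := lt_of_lt_of_le (by norm_num) hn3
  have hn : (n:ℝ) ≠ 0 := Nat.cast_ne_zero.mpr hn0.ne'
  have hA' : ∀ a c, A a c = 2/(n:ℝ) * (∑ c, A c c) * (if a = c then (1:ℝ) else 0) - A c a :=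
    fun a c => by have := hA a c; linarith
  simp only [eq_self_iff_true, if_true, mul_one]
  simp only [Finset.sum_sub_distrib]
  -- the X part
  have ha : ∀ a : Fin n, (∑ b,
      ((1/(n:ℝ) * (sV a * (if b = a then (1:ℝ) else 0) + sV b
            - sV a * (if a = b then (1:ℝ) else 0)) * w b
        + A b a * B a b + A a a * B b b
        + v a * (1/(n:ℝ) * (sW a + sW b * (if a = b then (1:ℝ) else 0)
            - sW b * (if a = b then (1:ℝ) else 0)))
        + 1/(n:ℝ) * (sV a + sV b * (if a = b then (1:ℝ) else 0)
            - sV b * (if a = b then (1:ℝ) else 0)) * w a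
        + A b b * B a a + A a b * B b a
        + v b * (1/(n:ℝ) * (sW a * (if b = a then (1:ℝ) else 0) + sW b
            - sW a * (if a = b then (1:ℝ) else 0))))/2))
      = 1/(2*(n:ℝ)) * (∑ c, sV c * w c) + 1/(2*(n:ℝ)) * (∑ c, v c * sW c)
        + (1/2) * (∑ b, A b a * B a b) + (1/2) * (∑ b, A a b * B b a)
        + ((∑ c, B c c)/2) * A a a + ((∑ c, A c c)/2) * B a a
        + ((n:ℝ)/(2*(n:ℝ))) * (v a * sW a) + ((n:ℝ)/(2*(n:ℝ))) * (sV a * w a) := by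
    intro a
    have e : ∀ b : Fin n,
        ((1/(n:ℝ) * (sV a * (if b = a then (1:ℝ) else 0) + sV b
            - sV a * (if a = b then (1:ℝ) else 0)) * w b
        + A b a * B a b + A a a * B b b
        + v a * (1/(n:ℝ) * (sW a + sW b * (if a = b then (1:ℝ) else 0)
            - sW b * (if a = b then (1:ℝ) else 0)))
        + 1/(n:ℝ) * (sV a + sV b * (if a = b then (1:ℝ) else 0)
            - sV b * (if a = b then (1:ℝ) else 0)) * w a
        + A b b * B a a + A a b * B b a
        + v b * (1/(n:ℝ) * (sW a * (if b = a then (1:ℝ) else 0) + sW b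
            - sW a * (if a = b then (1:ℝ) else 0))))/2)
        = (if b = a then (1:ℝ) else 0) * (sV a * w b/(2*(n:ℝ)))
          - (if a = b then (1:ℝ) else 0) * (sV a * w b/(2*(n:ℝ)))
          + (if b = a then (1:ℝ) else 0) * (v b * sW a/(2*(n:ℝ)))
          - (if a = b then (1:ℝ) else 0) * (v b * sW a/(2*(n:ℝ)))
          + sV b * w b/(2*(n:ℝ)) + v b * sW b/(2*(n:ℝ))
          + A b a * B a b/2 + A a b * B b a/2
          + (A a a/2) * B b b + (B a a/2) * A b b
          + (v a * sW a + sV a * w a)/(2*(n:ℝ)) := fun b => by ring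
    rw [Finset.sum_congr rfl fun b _ => e b]
    simp only [Finset.sum_add_distrib, Finset.sum_sub_distrib, dcol, dcol',
      ← Finset.mul_sum, ← Finset.sum_div, Finset.sum_const, Finset.card_univ,
      Fintype.card_fin, nsmul_eq_mul]
    ring
  rw [Finset.sum_congr rfl fun a _ => ha a]
  -- the delta part
  have hd : ∀ a : Fin n, (∑ b, (if a = b then (1:ℝ) else 0)/(n:ℝ)
          * (∑ c, (1/(n:ℝ) * (sV a * (if b = c then (1:ℝ) else 0)
                + sV b * (if a = c then (1:ℝ) else 0) - sV c * (if a = b then (1:ℝ) else 0)) * w c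
              + A b c * B a c + A a c * B b c
              + v c * (1/(n:ℝ) * (sW a * (if b = c then (1:ℝ) else 0)
                + sW b * (if a = c then (1:ℝ) else 0) - sW c * (if a = b then (1:ℝ) else 0))))))
      = 1/(n:ℝ) * (2/(n:ℝ) * (sV a * w a) - 1/(n:ℝ) * (∑ c, sV c * w c)
          + 2 * (∑ c, A a c * B a c)
          + 2/(n:ℝ) * (v a * sW a) - 1/(n:ℝ) * (∑ c, v c * sW c)) := by
    intro a
    have e : ∀ b : Fin n, (if a = b then (1:ℝ) else 0)/(n:ℝ)
          * (∑ c, (1/(n:ℝ) * (sV a * (if b = c then (1:ℝ) else 0)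
                + sV b * (if a = c then (1:ℝ) else 0) - sV c * (if a = b then (1:ℝ) else 0)) * w c
              + A b c * B a c + A a c * B b c
              + v c * (1/(n:ℝ) * (sW a * (if b = c then (1:ℝ) else 0)
                + sW b * (if a = c then (1:ℝ) else 0) - sW c * (if a = b then (1:ℝ) else 0)))))
        = (if a = b then (1:ℝ) else 0)
            * (1/(n:ℝ) * (∑ c, (1/(n:ℝ) * (sV a * (if b = c then (1:ℝ) else 0)
                + sV b * (if a = c then (1:ℝ) else 0) - sV c * (if a = b then (1:ℝ) else 0)) * w c
              + A b c * B a c + A a c * B b c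
              + v c * (1/(n:ℝ) * (sW a * (if b = c then (1:ℝ) else 0)
                + sW b * (if a = c then (1:ℝ) else 0)
                  - sW c * (if a = b then (1:ℝ) else 0)))))) := fun b => by ring
    rw [Finset.sum_congr rfl fun b _ => e b, dcol' a]
    simp only [eq_self_iff_true, if_true, mul_one]
    -- now compute the inner sum at b = a
    have e2 : ∀ c : Fin n,
        (1/(n:ℝ) * (sV a * (if a = c then (1:ℝ) else 0)
                + sV a * (if a = c then (1:ℝ) else 0) - sV c) * w c
              + A a c * B a c + A a c * B a c
              + v c * (1/(n:ℝ) * (sW a * (if a = c then (1:ℝ) else 0)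
                + sW a * (if a = c then (1:ℝ) else 0) - sW c)))
        = (if a = c then (1:ℝ) else 0) * (2/(n:ℝ) * (sV a * w c + sW a * v c))
          - 1/(n:ℝ) * (sV c * w c) - 1/(n:ℝ) * (v c * sW c)
          + 2 * (A a c * B a c) := fun c => by ring
    rw [Finset.sum_congr rfl fun c _ => e2 c]
    simp only [Finset.sum_add_distrib, Finset.sum_sub_distrib, dcol, dcol',
      ← Finset.mul_sum]
    ring
  rw [Finset.sum_congr rfl fun a _ => hd a]
  -- evaluate the Q sum using CKV
  have hQ : ∑ a, ∑ c, A a c * B a c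
      = 2/(n:ℝ) * (∑ c, A c c) * (∑ c, B c c) - ∑ a, ∑ b, A b a * B a b := by
    have e1 : ∀ a : Fin n, ∑ c, A a c * B a c
        = 2/(n:ℝ) * (∑ c, A c c) * B a a - ∑ c, A c a * B a c := by
      intro a
      have e : ∀ c : Fin n, A a c * B a c
          = (if a = c then (1:ℝ) else 0) * (2/(n:ℝ) * (∑ c, A c c) * B a c)
            - A c a * B a c := fun c => by rw [hA' a c]; ring
      rw [Finset.sum_congr rfl fun c _ => e c, Finset.sum_sub_distrib, dcol' a]
    rw [Finset.sum_congr rfl fun a _ => e1 a, Finset.sum_sub_distrib, ← Finset.mul_sum]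
  -- assemble
  have expand : ∀ a : Fin n, 1/(n:ℝ) * (2/(n:ℝ) * (sV a * w a) - 1/(n:ℝ) * (∑ c, sV c * w c)
          + 2 * (∑ c, A a c * B a c)
          + 2/(n:ℝ) * (v a * sW a) - 1/(n:ℝ) * (∑ c, v c * sW c))
      = 2/(n:ℝ)^2 * (sV a * w a) + 2/(n:ℝ)^2 * (v a * sW a)
        - 1/(n:ℝ)^2 * (∑ c, sV c * w c) - 1/(n:ℝ)^2 * (∑ c, v c * sW c)
        + (2/(n:ℝ)) * (∑ c, A a c * B a c) := fun a => by ring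
  rw [Finset.sum_congr rfl fun a _ => expand a]
  simp only [Finset.sum_add_distrib, Finset.sum_sub_distrib, ← Finset.mul_sum,
    Finset.sum_const, Finset.card_univ, Fintype.card_fin, nsmul_eq_mul]
  rw [hQ]
  have swap1 : ∑ a, ∑ b, A a b * B b a = ∑ a, ∑ b, A b a * B a b := Finset.sum_comm
  have swap2 : ∑ c, sV c * w c = ∑ a, w a * sV a :=
    Finset.sum_congr rfl fun c _ => by ring
  rw [swap1, swap2]
  field_simp
  ring

lemma algD (hn3 : 3 ≤ n) (v w sV sW : Fin n → ℝ) (A B : Fin n → Fin n → ℝ) :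
    ∑ a, ∑ b, (A a b * B b a
        + v b * (1/(n:ℝ) * (sW a * (if b = a then (1:ℝ) else 0)
            + sW b * (if a = a then (1:ℝ) else 0) - sW a * (if a = b then (1:ℝ) else 0)))
      - (B a b * A b a
        + w b * (1/(n:ℝ) * (sV a * (if b = a then (1:ℝ) else 0)
            + sV b * (if a = a then (1:ℝ) else 0) - sV a * (if a = b then (1:ℝ) else 0)))))
    = (∑ a, v a * sW a) - (∑ a, w a * sV a) := by
  have hn0 : 0 < n := lt_of_lt_of_le (by norm_num) hn3
  have hn : (n:ℝ) ≠ 0 := Nat.cast_ne_zero.mpr hn0.ne'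
  simp only [eq_self_iff_true, if_true, mul_one]
  have ha : ∀ a : Fin n, ∑ b, (A a b * B b a
        + v b * (1/(n:ℝ) * (sW a * (if b = a then (1:ℝ) else 0) + sW b
            - sW a * (if a = b then (1:ℝ) else 0)))
      - (B a b * A b a
        + w b * (1/(n:ℝ) * (sV a * (if b = a then (1:ℝ) else 0) + sV b
            - sV a * (if a = b then (1:ℝ) else 0)))))
      = (∑ b, A a b * B b a) - (∑ b, B a b * A b a)
        + 1/(n:ℝ) * (∑ b, v b * sW b) - 1/(n:ℝ) * (∑ b, w b * sV b) := by
    intro a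
    have e : ∀ b : Fin n, (A a b * B b a
        + v b * (1/(n:ℝ) * (sW a * (if b = a then (1:ℝ) else 0) + sW b
            - sW a * (if a = b then (1:ℝ) else 0)))
      - (B a b * A b a
        + w b * (1/(n:ℝ) * (sV a * (if b = a then (1:ℝ) else 0) + sV b
            - sV a * (if a = b then (1:ℝ) else 0)))))
        = (if b = a then (1:ℝ) else 0) * (v b * sW a/(n:ℝ) - w b * sV a/(n:ℝ))
          - (if a = b then (1:ℝ) else 0) * (v b * sW a/(n:ℝ) - w b * sV a/(n:ℝ))
          + A a b * B b a - B a b * A b a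
          + (1/(n:ℝ)) * (v b * sW b) - (1/(n:ℝ)) * (w b * sV b) := fun b => by ring
    rw [Finset.sum_congr rfl fun b _ => e b]
    simp only [Finset.sum_add_distrib, Finset.sum_sub_distrib, dcol, dcol', ← Finset.mul_sum]
    ring
  rw [Finset.sum_congr rfl fun a _ => ha a]
  have swap : ∑ a, ∑ b, B a b * A b a = ∑ a, ∑ b, A a b * B b a := by
    rw [Finset.sum_comm]
    exact Finset.sum_congr rfl fun a _ => Finset.sum_congr rfl fun b _ => by ring
  simp only [Finset.sum_add_distrib, Finset.sum_sub_distrib, ← Finset.mul_sum,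
    Finset.sum_const, Finset.card_univ, Fintype.card_fin, nsmul_eq_mul]
  rw [swap]
  field_simp
  ring

lemma algL (c : ℝ) (v w F sW : Fin n → ℝ) (Bm Hm : Fin n → Fin n → ℝ)
    (dV dW fx : ℝ) :
    (∑ a, v a * ((∑ b, (Bm a b * F b + w b * Hm a b)) + c * (sW a * fx + dW * F a)))
      + c * dV * ((∑ b, w b * F b) + c * dW * fx)
    = (∑ a, ∑ b, v a * w b * Hm a b) + (∑ a, ∑ b, v a * Bm a b * F b)
      + c * (dW * (∑ a, v a * F a) + dV * (∑ a, w a * F a))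
      + c * (∑ a, v a * sW a) * fx + c^2 * dV * dW * fx := by
  simp only [Finset.mul_sum, Finset.sum_mul, mul_add, add_mul, Finset.sum_add_distrib]
  simp only [mul_comm, mul_left_comm, mul_assoc]
  ring

lemma algBsum (v w F : Fin n → ℝ) (A B : Fin n → Fin n → ℝ) :
    ∑ b, (((n:ℝ)^2 - 4)/(2*(n:ℝ)^2) * ((∑ c, A c c) * w b + (∑ c, B c c) * v b)
        + ((n:ℝ)+2)/(2*(n:ℝ)) * ((∑ a, v a * B a b) + (∑ a, w a * A a b))) * F b
    = ((n:ℝ)^2 - 4)/(2*(n:ℝ)^2) * ((∑ c, A c c) * (∑ b, w b * F b)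
          + (∑ c, B c c) * (∑ b, v b * F b))
      + ((n:ℝ)+2)/(2*(n:ℝ)) * ((∑ a, ∑ b, v a * B a b * F b)
          + (∑ a, ∑ b, w a * A a b * F b)) := by
  have swap1 : ∑ a, ∑ b, v a * B a b * F b = ∑ b, ∑ a, v a * B a b * F b := Finset.sum_comm
  have swap2 : ∑ a, ∑ b, w a * A a b * F b = ∑ b, ∑ a, w a * A a b * F b := Finset.sum_comm
  rw [swap1, swap2]
  simp only [Finset.mul_sum, Finset.sum_mul, mul_add, add_mul, Finset.sum_add_distrib]
  simp only [mul_comm, mul_left_comm, mul_assoc]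
  try ring

lemma algBr (v w F : Fin n → ℝ) (A B : Fin n → Fin n → ℝ) :
    ∑ a, (∑ b, (v b * B b a - w b * A b a)) * F a
    = (∑ a, ∑ b, v a * B a b * F b) - (∑ a, ∑ b, w a * A a b * F b) := by
  have e : ∀ a : Fin n, (∑ b, (v b * B b a - w b * A b a)) * F a
      = ∑ b, (v b * B b a * F a - w b * A b a * F a) := by
    intro a
    rw [Finset.sum_mul]
    exact Finset.sum_congr rfl fun b _ => by ring
  rw [Finset.sum_congr rfl fun a _ => e a]
  simp only [Finset.sum_sub_distrib]
  congr 1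
  · exact Finset.sum_comm
  · exact Finset.sum_comm

end Algebra


/-- Composition formula: for conformal Killing vectors `V, W` on ℝⁿ (n ≥ 3) and smooth `f`,
`D_V D_W f = D_{V⊙W} f + (1/2) D_{[V,W]} f − ((n−2)/(4(n+1))) ⟨V,W⟩ f + (1/n)(Σ V^a W^a) Δf`. -/
theorem stmt_10 (n : ℕ) (hn : 3 ≤ n) (V W : (Fin n → ℝ) → (Fin n → ℝ))
    (hV : IsCKV n V) (hW : IsCKV n W) (f : (Fin n → ℝ) → ℝ) (hf : ContDiff ℝ (⊤ : ℕ∞) f) :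
    ∀ x : Fin n → ℝ,
      opD V (opD W f) x
        = opD2 (sprod V W) f x + 1 / 2 * opD (bracket V W) f x
          - ((n : ℝ) - 2) / (4 * ((n : ℝ) + 1)) * pairing V W x * f x
          + 1 / (n : ℝ) * (∑ a, V x a * W x a) * lap f x := by
  obtain ⟨hVs, hVk⟩ := hV
  obtain ⟨hWs, hWk⟩ := hW
  intro x
  have hn0 : 0 < n := by omega
  have hnR : (n:ℝ) ≠ 0 := Nat.cast_ne_zero.mpr hn0.ne'
  have hVc : ∀ c : Fin n, ContDiff ℝ (⊤ : ℕ∞) (fun y => V y c) := comp_smooth hVs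
  have hWc : ∀ c : Fin n, ContDiff ℝ (⊤ : ℕ∞) (fun y => W y c) := comp_smooth hWs
  have hdV : ContDiff ℝ (⊤ : ℕ∞) (divg V) := divg_smooth hVs
  have hdW : ContDiff ℝ (⊤ : ℕ∞) (divg W) := divg_smooth hWs
  have dP : ∀ (i c : Fin n), ContDiff ℝ (⊤ : ℕ∞) (pd i (fun z => V z c)) :=
    fun i c => pd_smooth (hVc c) i
  have dQ : ∀ (i c : Fin n), ContDiff ℝ (⊤ : ℕ∞) (pd i (fun z => W z c)) :=
    fun i c => pd_smooth (hWc c) i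
  -- first derivative of the opD W f
  have h1 : ∀ i : Fin n, pd i (opD W f) x
      = (∑ b, (pd i (fun y => W y b) x * pd b f x + W x b * pd i (pd b f) x))
        + ((n:ℝ)-2)/(2*(n:ℝ)) * (pd i (divg W) x * f x + divg W x * pd i f x) := by
    intro i
    have dsum : ContDiff ℝ (⊤ : ℕ∞) (fun y => ∑ b, W y b * pd b f y) :=
      ContDiff.sum fun b _ => (hWc b).mul (pd_smooth hf b)
    have dsnd : ContDiff ℝ (⊤ : ℕ∞) (fun y => ((n:ℝ)-2)/(2*(n:ℝ)) * divg W y * f y) :=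
      (contDiff_const.mul hdW).mul hf
    show pd i (fun y => (∑ b, W y b * pd b f y)
        + ((n:ℝ)-2)/(2*(n:ℝ)) * divg W y * f y) x = _
    rw [pd_add (cdiff dsum x) (cdiff dsnd x),
      pd_sum Finset.univ (fun b _ => cdiff ((hWc b).mul (pd_smooth hf b)) x) i,
      Finset.sum_congr rfl fun b _ => pd_mul (cdiff (hWc b) x) (cdiff (pd_smooth hf b) x) i,
      pd_mul (f := fun y => ((n:ℝ)-2)/(2*(n:ℝ)) * divg W y) (g := f)
        (cdiff (contDiff_const.mul hdW) x) (cdiff hf x),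
      pd_const_mul (cdiff hdW x)]
    ring
  -- first derivatives of sprod components
  have hT1 : ∀ (i a b : Fin n) (y : Fin n → ℝ),
      pd i (fun z => sprod V W z a b) y
        = (pd i (fun z => V z a) y * W y b + V y a * pd i (fun z => W z b) y
            + pd i (fun z => V z b) y * W y a + V y b * pd i (fun z => W z a) y)/2
          - (if a = b then (1:ℝ) else 0)/(n:ℝ)
              * ∑ c, (pd i (fun z => V z c) y * W y c + V y c * pd i (fun z => W z c) y) := by
    intro i a b y
    have s1 : ContDiff ℝ (⊤ : ℕ∞) (fun z => V z a * W z b + V z b * W z a) :=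
      ((hVc a).mul (hWc b)).add ((hVc b).mul (hWc a))
    have s2 : ContDiff ℝ (⊤ : ℕ∞) (fun z => ∑ c, V z c * W z c) :=
      ContDiff.sum fun c _ => (hVc c).mul (hWc c)
    show pd i (fun z => (V z a * W z b + V z b * W z a)/2
        - (if a = b then (1:ℝ) else 0)/(n:ℝ) * ∑ c, V z c * W z c) y = _
    rw [pd_sub (cdiff (s1.div_const 2) y) (cdiff (contDiff_const.mul s2) y),
      pd_div_const (cdiff s1 y) 2,
      pd_add (cdiff ((hVc a).mul (hWc b)) y) (cdiff ((hVc b).mul (hWc a)) y),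
      pd_mul (cdiff (hVc a) y) (cdiff (hWc b) y),
      pd_mul (cdiff (hVc b) y) (cdiff (hWc a) y),
      pd_const_mul (cdiff s2 y),
      pd_sum Finset.univ (fun c _ => cdiff ((hVc c).mul (hWc c)) y) i,
      Finset.sum_congr rfl fun c _ => pd_mul (cdiff (hVc c) y) (cdiff (hWc c) y) i]
    ring
  -- second derivatives of sprod components (using the CKV second derivative formula)
  have hT2 : ∀ a b : Fin n, pd a (pd b fun y => sprod V W y a b) x
      = ((1/(n:ℝ) * (pd a (divg V) x * (if b = a then (1:ℝ) else 0)
            + pd b (divg V) x * (if a = a then (1:ℝ) else 0)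
            - pd a (divg V) x * (if a = b then (1:ℝ) else 0)) * W x b
        + pd b (fun y => V y a) x * pd a (fun y => W y b) x
        + pd a (fun y => V y a) x * pd b (fun y => W y b) x
        + V x a * (1/(n:ℝ) * (pd a (divg W) x * (if b = b then (1:ℝ) else 0)
            + pd b (divg W) x * (if a = b then (1:ℝ) else 0)
            - pd b (divg W) x * (if a = b then (1:ℝ) else 0)))
        + 1/(n:ℝ) * (pd a (divg V) x * (if b = b then (1:ℝ) else 0)
            + pd b (divg V) x * (if a = b then (1:ℝ) else 0)
            - pd b (divg V) x * (if a = b then (1:ℝ) else 0)) * W x a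
        + pd b (fun y => V y b) x * pd a (fun y => W y a) x
        + pd a (fun y => V y b) x * pd b (fun y => W y a) x
        + V x b * (1/(n:ℝ) * (pd a (divg W) x * (if b = a then (1:ℝ) else 0)
            + pd b (divg W) x * (if a = a then (1:ℝ) else 0)
            - pd a (divg W) x * (if a = b then (1:ℝ) else 0))))/2
      - (if a = b then (1:ℝ) else 0)/(n:ℝ)
          * (∑ c, (1/(n:ℝ) * (pd a (divg V) x * (if b = c then (1:ℝ) else 0)
                + pd b (divg V) x * (if a = c then (1:ℝ) else 0)
                - pd c (divg V) x * (if a = b then (1:ℝ) else 0)) * W x c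
              + pd b (fun y => V y c) x * pd a (fun y => W y c) x
              + pd a (fun y => V y c) x * pd b (fun y => W y c) x
              + V x c * (1/(n:ℝ) * (pd a (divg W) x * (if b = c then (1:ℝ) else 0)
                + pd b (divg W) x * (if a = c then (1:ℝ) else 0)
                - pd c (divg W) x * (if a = b then (1:ℝ) else 0)))))) := by
    intro a b
    have hfun : pd b (fun z => sprod V W z a b) = fun y =>
        (pd b (fun z => V z a) y * W y b + V y a * pd b (fun z => W z b) y
          + pd b (fun z => V z b) y * W y a + V y b * pd b (fun z => W z a) y)/2
        - (if a = b then (1:ℝ) else 0)/(n:ℝ)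
            * ∑ c, (pd b (fun z => V z c) y * W y c + V y c * pd b (fun z => W z c) y) :=
      funext fun y => hT1 b a b y
    have q1 : ContDiff ℝ (⊤ : ℕ∞) (fun y => pd b (fun z => V z a) y * W y b) := (dP b a).mul (hWc b)
    have q2 : ContDiff ℝ (⊤ : ℕ∞) (fun y => V y a * pd b (fun z => W z b) y) := (hVc a).mul (dQ b b)
    have q3 : ContDiff ℝ (⊤ : ℕ∞) (fun y => pd b (fun z => V z b) y * W y a) := (dP b b).mul (hWc a)
    have q4 : ContDiff ℝ (⊤ : ℕ∞) (fun y => V y b * pd b (fun z => W z a) y) := (hVc b).mul (dQ b a)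
    have qsum : ContDiff ℝ (⊤ : ℕ∞)
        (fun y => ∑ c, (pd b (fun z => V z c) y * W y c + V y c * pd b (fun z => W z c) y)) :=
      ContDiff.sum fun c _ => ((dP b c).mul (hWc c)).add ((hVc c).mul (dQ b c))
    have hin : ∀ c : Fin n,
        pd a (fun y => pd b (fun z => V z c) y * W y c + V y c * pd b (fun z => W z c) y) x
          = 1/(n:ℝ) * (pd a (divg V) x * (if b = c then (1:ℝ) else 0)
                + pd b (divg V) x * (if a = c then (1:ℝ) else 0)
                - pd c (divg V) x * (if a = b then (1:ℝ) else 0)) * W x c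
              + pd b (fun y => V y c) x * pd a (fun y => W y c) x
              + pd a (fun y => V y c) x * pd b (fun y => W y c) x
              + V x c * (1/(n:ℝ) * (pd a (divg W) x * (if b = c then (1:ℝ) else 0)
                + pd b (divg W) x * (if a = c then (1:ℝ) else 0)
                - pd c (divg W) x * (if a = b then (1:ℝ) else 0))) := by
      intro c
      rw [pd_add (cdiff ((dP b c).mul (hWc c)) x) (cdiff ((hVc c).mul (dQ b c)) x),
        pd_mul (cdiff (dP b c) x) (cdiff (hWc c) x),
        pd_mul (cdiff (hVc c) x) (cdiff (dQ b c) x),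
        ckv_second ⟨hVs, hVk⟩ a b c x, ckv_second ⟨hWs, hWk⟩ a b c x]
      ring
    rw [hfun,
      pd_sub (cdiff ((((q1.add q2).add q3).add q4).div_const 2) x)
        (cdiff (contDiff_const.mul qsum) x),
      pd_div_const (cdiff (((q1.add q2).add q3).add q4) x) 2,
      pd_add (cdiff ((q1.add q2).add q3) x) (cdiff q4 x),
      pd_add (cdiff (q1.add q2) x) (cdiff q3 x),
      pd_add (cdiff q1 x) (cdiff q2 x),
      pd_mul (cdiff (dP b a) x) (cdiff (hWc b) x),
      pd_mul (cdiff (hVc a) x) (cdiff (dQ b b) x),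
      pd_mul (cdiff (dP b b) x) (cdiff (hWc a) x),
      pd_mul (cdiff (hVc b) x) (cdiff (dQ b a) x),
      pd_const_mul (cdiff qsum x),
      pd_sum Finset.univ
        (fun c _ => cdiff (((dP b c).mul (hWc c)).add ((hVc c).mul (dQ b c))) x) a,
      Finset.sum_congr rfl fun c _ => hin c,
      ckv_second ⟨hVs, hVk⟩ a b a x, ckv_second ⟨hVs, hVk⟩ a b b x,
      ckv_second ⟨hWs, hWk⟩ a b b x, ckv_second ⟨hWs, hWk⟩ a b a x]
    ring
  -- derivative of the bracket components
  have hbr : ∀ a : Fin n, pd a (fun y => bracket V W y a) x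
      = ∑ b, (pd a (fun y => V y b) x * pd b (fun y => W y a) x
          + V x b * (1/(n:ℝ) * (pd a (divg W) x * (if b = a then (1:ℝ) else 0)
            + pd b (divg W) x * (if a = a then (1:ℝ) else 0)
            - pd a (divg W) x * (if a = b then (1:ℝ) else 0)))
        - (pd a (fun y => W y b) x * pd b (fun y => V y a) x
          + W x b * (1/(n:ℝ) * (pd a (divg V) x * (if b = a then (1:ℝ) else 0)
            + pd b (divg V) x * (if a = a then (1:ℝ) else 0)
            - pd a (divg V) x * (if a = b then (1:ℝ) else 0))))) := by
    intro a
    have hbf : (fun y => bracket V W y a)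
        = fun y => ∑ b, (V y b * pd b (fun z => W z a) y - W y b * pd b (fun z => V z a) y) :=
      rfl
    have hib : ∀ b : Fin n,
        pd a (fun y => V y b * pd b (fun z => W z a) y - W y b * pd b (fun z => V z a) y) x
        = pd a (fun y => V y b) x * pd b (fun y => W y a) x
          + V x b * (1/(n:ℝ) * (pd a (divg W) x * (if b = a then (1:ℝ) else 0)
            + pd b (divg W) x * (if a = a then (1:ℝ) else 0)
            - pd a (divg W) x * (if a = b then (1:ℝ) else 0)))
        - (pd a (fun y => W y b) x * pd b (fun y => V y a) x
          + W x b * (1/(n:ℝ) * (pd a (divg V) x * (if b = a then (1:ℝ) else 0)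
            + pd b (divg V) x * (if a = a then (1:ℝ) else 0)
            - pd a (divg V) x * (if a = b then (1:ℝ) else 0)))) := by
      intro b
      rw [pd_sub (cdiff ((hVc b).mul (dQ b a)) x) (cdiff ((hWc b).mul (dP b a)) x),
        pd_mul (cdiff (hVc b) x) (cdiff (dQ b a) x),
        pd_mul (cdiff (hWc b) x) (cdiff (dP b a) x),
        ckv_second ⟨hVs, hVk⟩ a b a x, ckv_second ⟨hWs, hWk⟩ a b a x]
    rw [hbf,
      pd_sum Finset.univ
        (fun b _ => cdiff (((hVc b).mul (dQ b a)).sub ((hWc b).mul (dP b a))) x) a,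
      Finset.sum_congr rfl fun b _ => hib b]
  -- assemble the four pieces
  have eL : opD V (opD W f) x
      = (∑ a, ∑ b, V x a * W x b * pd a (pd b f) x)
        + (∑ a, ∑ b, V x a * pd a (fun y => W y b) x * pd b f x)
        + ((n:ℝ)-2)/(2*(n:ℝ)) * (divg W x * (∑ a, V x a * pd a f x)
            + divg V x * (∑ a, W x a * pd a f x))
        + ((n:ℝ)-2)/(2*(n:ℝ)) * (∑ a, V x a * pd a (divg W) x) * f x
        + (((n:ℝ)-2)/(2*(n:ℝ)))^2 * divg V x * divg W x * f x := by
    show (∑ a, V x a * pd a (opD W f) x)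
        + ((n:ℝ)-2)/(2*(n:ℝ)) * divg V x * opD W f x = _
    rw [Finset.sum_congr rfl fun a _ => congrArg (fun t => V x a * t) (h1 a)]
    exact algL (((n:ℝ)-2)/(2*(n:ℝ))) (fun i => V x i) (fun i => W x i)
      (fun i => pd i f x) (fun i => pd i (divg W) x)
      (fun i j => pd i (fun y => W y j) x) (fun i j => pd i (pd j f) x)
      (divg V x) (divg W x) (f x)
  have eR1a : (∑ a, ∑ b, sprod V W x a b * pd a (pd b f) x)
      = (∑ a, ∑ b, V x a * W x b * pd a (pd b f) x)
        - 1/(n:ℝ) * (∑ c, V x c * W x c) * (∑ a, pd a (pd a f) x) :=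
    algA (fun i => V x i) (fun i => W x i) (fun i j => pd i (pd j f) x)
      (fun i j => pd_comm hf i j x)
  have hTb : ∀ b : Fin n, (∑ a, pd a (fun y => sprod V W y a b) x)
      = ((n:ℝ)^2 - 4)/(2*(n:ℝ)^2) * ((∑ c, pd c (fun y => V y c) x) * W x b
          + (∑ c, pd c (fun y => W y c) x) * V x b)
        + ((n:ℝ)+2)/(2*(n:ℝ)) * ((∑ a, V x a * pd a (fun y => W y b) x)
          + (∑ a, W x a * pd a (fun y => V y b) x)) := by
    intro b
    rw [Finset.sum_congr rfl fun a _ => hT1 a a b x]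
    exact algB hnR (fun i => V x i) (fun i => W x i)
      (fun i j => pd i (fun y => V y j) x) (fun i j => pd i (fun y => W y j) x)
      (fun i j => hVk i j x) (fun i j => hWk i j x) b
  have eR1b : (∑ b, (∑ a, pd a (fun y => sprod V W y a b) x) * pd b f x)
      = ((n:ℝ)^2 - 4)/(2*(n:ℝ)^2) * ((∑ c, pd c (fun y => V y c) x)
            * (∑ b, W x b * pd b f x)
          + (∑ c, pd c (fun y => W y c) x) * (∑ b, V x b * pd b f x))
        + ((n:ℝ)+2)/(2*(n:ℝ)) * ((∑ a, ∑ b, V x a * pd a (fun y => W y b) x * pd b f x)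
          + (∑ a, ∑ b, W x a * pd a (fun y => V y b) x * pd b f x)) := by
    rw [Finset.sum_congr rfl fun b _ => congrArg (fun t => t * pd b f x) (hTb b)]
    exact algBsum (fun i => V x i) (fun i => W x i) (fun i => pd i f x)
      (fun i j => pd i (fun y => V y j) x) (fun i j => pd i (fun y => W y j) x)
  have eR1c : (∑ a, ∑ b, pd a (pd b fun y => sprod V W y a b) x)
      = ((n:ℝ)+2)*((n:ℝ)-1)/(n:ℝ)^2 * ((∑ a, W x a * pd a (divg V) x)
          + (∑ a, V x a * pd a (divg W) x))
        + ((n:ℝ)+2)/(n:ℝ)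
            * (∑ a, ∑ b, pd b (fun y => V y a) x * pd a (fun y => W y b) x)
        + ((n:ℝ)^2-4)/(n:ℝ)^2 * (∑ c, pd c (fun y => V y c) x)
            * (∑ c, pd c (fun y => W y c) x) := by
    rw [Finset.sum_congr rfl fun a _ => Finset.sum_congr rfl fun b _ => hT2 a b]
    exact algC hn (fun i => V x i) (fun i => W x i)
      (fun i => pd i (divg V) x) (fun i => pd i (divg W) x)
      (fun i j => pd i (fun y => V y j) x) (fun i j => pd i (fun y => W y j) x)
      (fun i j => hVk i j x) (fun i j => hWk i j x)
  have eR2a : (∑ a, bracket V W x a * pd a f x)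
      = (∑ a, ∑ b, V x a * pd a (fun y => W y b) x * pd b f x)
        - (∑ a, ∑ b, W x a * pd a (fun y => V y b) x * pd b f x) :=
    algBr (fun i => V x i) (fun i => W x i) (fun i => pd i f x)
      (fun i j => pd i (fun y => V y j) x) (fun i j => pd i (fun y => W y j) x)
  have eR2b : divg (bracket V W) x
      = (∑ a, V x a * pd a (divg W) x) - (∑ a, W x a * pd a (divg V) x) := by
    show (∑ a, pd a (fun y => bracket V W y a) x) = _
    rw [Finset.sum_congr rfl fun a _ => hbr a]
    exact algD hn (fun i => V x i) (fun i => W x i)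
      (fun i => pd i (divg V) x) (fun i => pd i (divg W) x)
      (fun i j => pd i (fun y => V y j) x) (fun i j => pd i (fun y => W y j) x)
  -- final assembly
  have eR1 : opD2 (sprod V W) f x
      = ((∑ a, ∑ b, V x a * W x b * pd a (pd b f) x)
          - 1/(n:ℝ) * (∑ c, V x c * W x c) * (∑ a, pd a (pd a f) x))
        + (n:ℝ)/((n:ℝ)+2)
          * (((n:ℝ)^2 - 4)/(2*(n:ℝ)^2) * ((∑ c, pd c (fun y => V y c) x)
                * (∑ b, W x b * pd b f x)
              + (∑ c, pd c (fun y => W y c) x) * (∑ b, V x b * pd b f x))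
            + ((n:ℝ)+2)/(2*(n:ℝ)) * ((∑ a, ∑ b, V x a * pd a (fun y => W y b) x * pd b f x)
              + (∑ a, ∑ b, W x a * pd a (fun y => V y b) x * pd b f x)))
        + (n:ℝ)*((n:ℝ)-2)/(4*((n:ℝ)+2)*((n:ℝ)+1))
          * (((n:ℝ)+2)*((n:ℝ)-1)/(n:ℝ)^2 * ((∑ a, W x a * pd a (divg V) x)
              + (∑ a, V x a * pd a (divg W) x))
            + ((n:ℝ)+2)/(n:ℝ)
                * (∑ a, ∑ b, pd b (fun y => V y a) x * pd a (fun y => W y b) x)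
            + ((n:ℝ)^2-4)/(n:ℝ)^2 * (∑ c, pd c (fun y => V y c) x)
                * (∑ c, pd c (fun y => W y c) x)) * f x := by
    show (∑ a, ∑ b, sprod V W x a b * pd a (pd b f) x)
        + (n:ℝ)/((n:ℝ)+2) * ∑ b, (∑ a, pd a (fun y => sprod V W y a b) x) * pd b f x
        + (n:ℝ)*((n:ℝ)-2)/(4*((n:ℝ)+2)*((n:ℝ)+1))
            * (∑ a, ∑ b, pd a (pd b fun y => sprod V W y a b) x) * f x = _
    rw [eR1a, eR1b, eR1c]
  have eR2 : opD (bracket V W) f x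
      = ((∑ a, ∑ b, V x a * pd a (fun y => W y b) x * pd b f x)
          - (∑ a, ∑ b, W x a * pd a (fun y => V y b) x * pd b f x))
        + ((n:ℝ)-2)/(2*(n:ℝ)) * ((∑ a, V x a * pd a (divg W) x)
            - (∑ a, W x a * pd a (divg V) x)) * f x := by
    show (∑ a, bracket V W x a * pd a f x)
        + ((n:ℝ)-2)/(2*(n:ℝ)) * divg (bracket V W) x * f x = _
    rw [eR2a, eR2b]
  have epair : pairing V W x
      = (∑ a, ∑ b, pd b (fun y => V y a) x * pd a (fun y => W y b) x)
        - ((n:ℝ)-2)/(n:ℝ)^2 * divg V x * divg W x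
        - 2/(n:ℝ) * (∑ a, V x a * pd a (divg W) x)
        - 2/(n:ℝ) * (∑ a, W x a * pd a (divg V) x) := rfl
  have elap : lap f x = ∑ a, pd a (pd a f) x := rfl
  have edV : divg V x = ∑ c, pd c (fun y => V y c) x := rfl
  have edW : divg W x = ∑ c, pd c (fun y => W y c) x := rfl
  rw [eL, eR1, eR2, epair, elap, edV, edW]
  have h2 : (n:ℝ) + 2 ≠ 0 := by positivity
  have h1' : (n:ℝ) + 1 ≠ 0 := by positivity
  field_simp
  ring
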